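/- Let θ ∈ [0, π/2), φ ∈ (θ, π/2], and let ξ', η ∈ ℝ^d. Let R_s, B_s, R_a be real d×d matrices with R_s, B_s symmetric and R_a antisymmetric, R_s positive semidefinite, satisfying: (i) |(R_s ξ', η)| ≤ (cot φ)((R_s ξ', ξ') + (R_s η, η)) whenever cot φ = |p−2|/(2√(p−1)), and generally |(R_s ξ, η)| ≤ (1/2)((R_s ξ, ξ)+(R_s η, η)); (ii) |(B_s ξ', ξ') + (B_s η, η) − 2(R_a ξ', η)| ≤ (tan θ)((R_s ξ', ξ') + (R_s η, η)); (iii) |(R_a ξ', η)| ≤ (tan θ)((R_s ξ', ξ') + (R_s η, η)); (iv) |(B_s ξ, η)| ≤ (1/2)(tan θ)((R_s ξ, ξ) + (R_s η, η)) for all ξ, η. Let p ∈ (1, ∞) satisfy |1 − 2/p| < cos θ and φ = arccos|1 − 2/p|. Then |(B_s ξ', ξ') + (B_s η, η) − ((p−2)/√(p−1))(R_s ξ', η) − (p/√(p−1))(R_a ξ', η)| ≤ K ((R_s ξ', ξ') + (R_s η, η) + ((p−2)/√(p−1))(B_s ξ', η)), where K = ((2/sin φ − 1) tan θ + cot φ)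 / (1 − (tan θ) cot φ). -/
import Mathlib


open Matrix

/-- φ = arccos |1 - 2/p|. -/
noncomputable def phi (p : ℝ) : ℝ := Real.arccos |1 - 2 / p|

lemma key_scalar (t c s S u r a b q2 : ℝ)
    (ht : 0 ≤ t) (hc : 0 ≤ c) (hs0 : 0 < s) (hs1 : s ≤ 1)
    (hq2 : |q2| = 2 * c)
    (hS : 0 ≤ S) (htc : t * c < 1)
    (hu : |u - 2 * a| ≤ t * S) (ha : |a| ≤ t * S)
    (hr : |r| ≤ S / 2) (hb : |b| ≤ t / 2 * S) :
    |u - q2 * r - (2 / s) * a| ≤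
      (((2 / s - 1) * t + c) / (1 - t * c)) * (S + q2 * b) := by
  have hq : (2 : ℝ) ≤ 2 / s := by
    rw [le_div_iff₀ hs0]; linarith
  have hD : 0 < 1 - t * c := by linarith
  have hN : 0 ≤ (2 / s - 1) * t + c := by nlinarith
  have habsr : 0 ≤ |r| := abs_nonneg r
  have habsa : 0 ≤ |a| := abs_nonneg a
  have habsb : 0 ≤ |b| := abs_nonneg b
  have h5 : |u - q2 * r - (2 / s) * a| ≤ ((2 / s - 1) * t + c) * S := by
    have e : u - q2 * r - (2 / s) * a = (u - 2 * a) + (-q2) * r + (2 - 2 / s) * a := by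
      ring
    rw [e]
    calc |(u - 2 * a) + (-q2) * r + (2 - 2 / s) * a|
        ≤ |u - 2 * a| + |(-q2) * r| + |(2 - 2 / s) * a| := abs_add_three _ _ _
      _ = |u - 2 * a| + |q2| * |r| + (2 / s - 2) * |a| := by
          rw [abs_mul, abs_mul, abs_neg, abs_of_nonpos (by linarith : 2 - 2 / s ≤ 0)]
          ring
      _ ≤ t * S + (2 * c) * (S / 2) + (2 / s - 2) * (t * S) := by
          have h6 : |q2| * |r| ≤ (2 * c) * (S / 2) := by
            rw [hq2]; exact mul_le_mul_of_nonneg_left hr (by linarith)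
          have h7 : (2 / s - 2) * |a| ≤ (2 / s - 2) * (t * S) :=
            mul_le_mul_of_nonneg_left ha (by linarith)
          linarith
      _ = ((2 / s - 1) * t + c) * S := by ring
  have h6 : (1 - t * c) * S ≤ S + q2 * b := by
    have h7 : -(|q2| * |b|) ≤ q2 * b := by
      rw [← abs_mul]; exact neg_abs_le _
    rw [hq2] at h7
    nlinarith [mul_le_mul_of_nonneg_left hb (by linarith : (0:ℝ) ≤ 2 * c)]
  calc |u - q2 * r - (2 / s) * a| ≤ ((2 / s - 1) * t + c) * S := h5
    _ = (((2 / s - 1) * t + c) / (1 - t * c)) * ((1 - t * c) * S) := by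
        field_simp
    _ ≤ (((2 / s - 1) * t + c) / (1 - t * c)) * (S + q2 * b) :=
        mul_le_mul_of_nonneg_left h6 (div_nonneg hN hD.le)

theorem stmt_11 (d : ℕ) (p θ : ℝ) (hp : 1 < p)
    (hθ : θ ∈ Set.Ico 0 (Real.pi / 2))
    (hpθ : |1 - 2 / p| < Real.cos θ)
    (Rs Bs Ra : Matrix (Fin d) (Fin d) ℝ)
    (hRsym : Rs.IsSymm) (hBsym : Bs.IsSymm) (hRa : Raᵀ = -Ra)
    (hpos : ∀ ξ : Fin d → ℝ, 0 ≤ Rs.mulVec ξ ⬝ᵥ ξ)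
    (ξ' η : Fin d → ℝ)
    (h1 : ∀ ξ ζ : Fin d → ℝ, |Rs.mulVec ξ ⬝ᵥ ζ| ≤
      (1 / 2) * (Rs.mulVec ξ ⬝ᵥ ξ + Rs.mulVec ζ ⬝ᵥ ζ))
    (h2 : |Bs.mulVec ξ' ⬝ᵥ ξ' + Bs.mulVec η ⬝ᵥ η - 2 * (Ra.mulVec ξ' ⬝ᵥ η)| ≤
      Real.tan θ * (Rs.mulVec ξ' ⬝ᵥ ξ' + Rs.mulVec η ⬝ᵥ η))
    (h3 : |Ra.mulVec ξ' ⬝ᵥ η| ≤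
      Real.tan θ * (Rs.mulVec ξ' ⬝ᵥ ξ' + Rs.mulVec η ⬝ᵥ η))
    (h4 : ∀ ξ ζ : Fin d → ℝ, |Bs.mulVec ξ ⬝ᵥ ζ| ≤
      (1 / 2) * Real.tan θ * (Rs.mulVec ξ ⬝ᵥ ξ + Rs.mulVec ζ ⬝ᵥ ζ)) :
    |Bs.mulVec ξ' ⬝ᵥ ξ' + Bs.mulVec η ⬝ᵥ η
        - ((p - 2) / Real.sqrt (p - 1)) * (Rs.mulVec ξ' ⬝ᵥ η)
        - (p / Real.sqrt (p - 1)) * (Ra.mulVec ξ' ⬝ᵥ η)| ≤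
      (((2 / Real.sin (phi p) - 1) * Real.tan θ
          + Real.cos (phi p) / Real.sin (phi p)) /
        (1 - Real.tan θ * (Real.cos (phi p) / Real.sin (phi p)))) *
      (Rs.mulVec ξ' ⬝ᵥ ξ' + Rs.mulVec η ⬝ᵥ η
        + ((p - 2) / Real.sqrt (p - 1)) * (Bs.mulVec ξ' ⬝ᵥ η)) := by
  obtain ⟨hθ0, hθ2⟩ := hθ
  have hpi := Real.pi_pos
  have hp0 : (0 : ℝ) < p := by linarith
  have hp1 : (0 : ℝ) < p - 1 := by linarith
  have hsq : (0 : ℝ) < Real.sqrt (p - 1) := Real.sqrt_pos.2 hp1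
  have hx0 : (0 : ℝ) ≤ |1 - 2 / p| := abs_nonneg _
  have hx1 : |1 - 2 / p| ≤ 1 := by
    rw [abs_le]
    constructor
    · have : 2 / p < 2 := by rw [div_lt_iff₀ hp0]; linarith
      linarith
    · have : 0 < 2 / p := by positivity
      linarith
  have hcos : Real.cos (phi p) = |1 - 2 / p| :=
    Real.cos_arccos (by linarith) hx1
  have hsin : Real.sin (phi p) = 2 * Real.sqrt (p - 1) / p := by
    rw [phi, Real.sin_arccos]
    have hsqr : Real.sqrt (p - 1) ^ 2 = p - 1 := Real.sq_sqrt hp1.le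
    have e : 1 - |1 - 2 / p| ^ 2 = (2 * Real.sqrt (p - 1) / p) ^ 2 := by
      rw [sq_abs]
      field_simp
      nlinarith [hsqr]
    rw [e, Real.sqrt_sq (by positivity)]
  have hs0 : 0 < Real.sin (phi p) := by rw [hsin]; positivity
  have hs1 : Real.sin (phi p) ≤ 1 := Real.sin_le_one _
  have hcθ : 0 < Real.cos θ := lt_of_le_of_lt hx0 hpθ
  have ht : 0 ≤ Real.tan θ :=
    Real.tan_nonneg_of_nonneg_of_le_pi_div_two hθ0 hθ2.le
  have hc : 0 ≤ Real.cos (phi p) / Real.sin (phi p) := by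
    rw [hcos]; positivity
  -- φ > θ
  have hφθ : θ < phi p := by
    have h := Real.strictAntiOn_arccos
      (Set.mem_Icc.2 ⟨by linarith, hx1⟩)
      (Set.mem_Icc.2 ⟨by linarith [Real.neg_one_le_cos θ], Real.cos_le_one θ⟩) hpθ
    rwa [Real.arccos_cos hθ0 (by linarith)] at h
  have hφ2 : phi p ≤ Real.pi / 2 := Real.arccos_le_pi_div_two.2 hx0
  -- t * c < 1
  have htc : Real.tan θ * (Real.cos (phi p) / Real.sin (phi p)) < 1 := by
    have hsub : 0 < Real.sin (phi p - θ) :=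
      Real.sin_pos_of_pos_of_lt_pi (by linarith) (by linarith)
    rw [Real.sin_sub] at hsub
    rw [Real.tan_eq_sin_div_cos, div_mul_div_comm, div_lt_one (by positivity)]
    nlinarith
  -- coefficient identities
  have hq : p / Real.sqrt (p - 1) = 2 / Real.sin (phi p) := by
    rw [hsin]; field_simp
  have hq2 : |(p - 2) / Real.sqrt (p - 1)| =
      2 * (Real.cos (phi p) / Real.sin (phi p)) := by
    rw [hcos, hsin, abs_div, abs_of_nonneg hsq.le]
    have e : |1 - 2 / p| = |p - 2| / p := by
      rw [show (1 : ℝ) - 2 / p = (p - 2) / p by field_simp, abs_div,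
        abs_of_pos hp0]
    rw [e]
    field_simp
  have hS : 0 ≤ Rs.mulVec ξ' ⬝ᵥ ξ' + Rs.mulVec η ⬝ᵥ η :=
    add_nonneg (hpos ξ') (hpos η)
  have hr := h1 ξ' η
  have hb := h4 ξ' η
  have := key_scalar (Real.tan θ) (Real.cos (phi p) / Real.sin (phi p))
    (Real.sin (phi p)) (Rs.mulVec ξ' ⬝ᵥ ξ' + Rs.mulVec η ⬝ᵥ η)
    (Bs.mulVec ξ' ⬝ᵥ ξ' + Bs.mulVec η ⬝ᵥ η)
    (Rs.mulVec ξ' ⬝ᵥ η) (Ra.mulVec ξ' ⬝ᵥ η) (Bs.mulVec ξ' ⬝ᵥ η)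
    ((p - 2) / Real.sqrt (p - 1))
    ht hc hs0 hs1 hq2 hS htc h2 h3 (by linarith) (by linarith)
  rw [hq]
  exact this
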